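/- Let G be a finite connected simple graph with γ'MB(G) = 2 and a cut-vertex x such that G − x has exactly two connected components C₁ and C₂. Then for each i ∈ {1, 2} the component C_i contains a universal vertex of C_i, and at least one of C₁, C₂ contains at least two universal vertices of itself. -/
import Mathlib


/-- `D` is a dominating set of `G`: every vertex not in `D` has a neighbor in `D`. -/
def Dominating {V : Type*} (G : SimpleGraph V) (D : Set V) : Prop :=
  ∀ v, v ∉ D → ∃ d ∈ D, G.Adj d v

/-- Dominator wins the S-game on `G` within one move. -/
def WinsWithin1 {V : Type*} (G : SimpleGraph V) : Prop :=
  ∀ s₁ : V, ∃ d₁, d₁ ≠ s₁ ∧ Dominating G {d₁}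

/-- Dominator wins the S-game on `G` within two moves. -/
def WinsWithin2 {V : Type*} (G : SimpleGraph V) : Prop :=
  ∀ s₁ : V, ∃ d₁, d₁ ≠ s₁ ∧
    (Dominating G {d₁} ∨
      ∀ s₂, s₂ ∉ ({s₁, d₁} : Set V) →
        ∃ d₂, d₂ ∉ ({s₁, d₁, s₂} : Set V) ∧ Dominating G {d₁, d₂})

/-- `γ'MB(G) = 2`: Dominator wins the S-game within two moves but not within one. -/
def MBPrimeEqTwo {V : Type*} (G : SimpleGraph V) : Prop :=
  WinsWithin2 G ∧ ¬ WinsWithin1 G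

/-- `G` is `2`-`γ'MB`-critical: `γ'MB(G) = 2` and for every edge `e`, Dominator does not
win the S-game on `G - e` within two moves. -/
def Critical2 {V : Type*} (G : SimpleGraph V) : Prop :=
  MBPrimeEqTwo G ∧ ∀ u v : V, G.Adj u v → ¬ WinsWithin2 (G.deleteEdges {s(u, v)})

/-- `v` is a universal vertex of the subgraph of `G` induced on `C`:
`v ∈ C` and `v` is adjacent in `G` to every other vertex of `C`. -/
def UnivIn {V : Type*} (G : SimpleGraph V) (C : Set V) (v : V) : Prop :=
  v ∈ C ∧ ∀ u ∈ C, u ≠ v → G.Adj v u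

/-- `G - x` has exactly two connected components, with vertex sets `C₁` and `C₂`. -/
def IsTwoComponents {V : Type*} (G : SimpleGraph V) (x : V) (C₁ C₂ : Set V) : Prop :=
  C₁.Nonempty ∧ C₂.Nonempty ∧ Disjoint C₁ C₂ ∧ C₁ ∪ C₂ = {x}ᶜ ∧
    (G.induce C₁).Connected ∧ (G.induce C₂).Connected ∧
    ∀ u ∈ C₁, ∀ v ∈ C₂, ¬ G.Adj u v

lemma pairDom {V : Type*} (G : SimpleGraph V) (x : V) (C₁ C₂ : Set V)
    (hdisj : Disjoint C₁ C₂) (hunion : C₁ ∪ C₂ = {x}ᶜ)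
    (hnoadj : ∀ u ∈ C₁, ∀ v ∈ C₂, ¬ G.Adj u v)
    (hC₂ : C₂.Nonempty) {d₁ d₂ : V} (hd₁ : d₁ ∈ C₁) (hd₂x : d₂ ≠ x)
    (hdom : Dominating G {d₁, d₂}) :
    UnivIn G C₂ d₂ := by
  have hd1n : d₁ ∉ C₂ := Set.disjoint_left.mp hdisj hd₁
  have hd₂ : d₂ ∈ C₁ ∪ C₂ := by rw [hunion]; exact hd₂x
  have hd₂C₂ : d₂ ∈ C₂ := by
    rcases hd₂ with h | h
    · obtain ⟨w, hw⟩ := hC₂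
      have hwmem : w ∉ ({d₁, d₂} : Set V) := by
        intro hmem
        rcases hmem with rfl | rfl
        · exact hd1n hw
        · exact Set.disjoint_left.mp hdisj h hw
      obtain ⟨d, hd, hadj⟩ := hdom w hwmem
      rcases hd with rfl | rfl
      · exact absurd hadj (hnoadj d hd₁ w hw)
      · exact absurd hadj (hnoadj d h w hw)
    · exact h
  refine ⟨hd₂C₂, fun u hu hne => ?_⟩
  have humem : u ∉ ({d₁, d₂} : Set V) := by
    intro hmem
    rcases hmem with rfl | rfl
    · exact hd1n hu
    · exact hne rfl
  obtain ⟨d, hd, hadj⟩ := hdom u humem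
  rcases hd with rfl | rfl
  · exact absurd hadj (hnoadj d hd₁ u hu)
  · exact hadj

lemma half {V : Type*} (G : SimpleGraph V) (x : V) (C₁ C₂ : Set V)
    (hdisj : Disjoint C₁ C₂) (hunion : C₁ ∪ C₂ = {x}ᶜ)
    (hnoadj : ∀ u ∈ C₁, ∀ v ∈ C₂, ¬ G.Adj u v)
    (hC₂ : C₂.Nonempty) {d₁ : V} (hd₁ : d₁ ∈ C₁)
    (H : ∀ s₂, s₂ ∉ ({x, d₁} : Set V) →
        ∃ d₂, d₂ ∉ ({x, d₁, s₂} : Set V) ∧ Dominating G {d₁, d₂}) :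
    UnivIn G C₁ d₁ ∧ ∃ a b, a ≠ b ∧ UnivIn G C₂ a ∧ UnivIn G C₂ b := by
  have hnoadj' : ∀ u ∈ C₂, ∀ v ∈ C₁, ¬ G.Adj u v := fun u hu v hv h =>
    hnoadj v hv u hu h.symm
  have hxC : ∀ v ∈ C₁ ∪ C₂, v ≠ x := by
    intro v hv
    rw [hunion] at hv; exact hv
  obtain ⟨w, hw⟩ := hC₂
  have hwx : w ≠ x := hxC w (Or.inr hw)
  have hwd₁ : w ≠ d₁ := fun h => Set.disjoint_left.mp hdisj hd₁ (h ▸ hw)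
  obtain ⟨d₂, hd₂mem, hdom⟩ := H w (by
    intro h; rcases h with rfl | rfl
    · exact hwx rfl
    · exact hwd₁ rfl)
  have hd₂x : d₂ ≠ x := fun h => hd₂mem (by left; exact h)
  have hd₂u : UnivIn G C₂ d₂ := pairDom G x C₁ C₂ hdisj hunion hnoadj ⟨w, hw⟩ hd₁ hd₂x hdom
  have hd₁x : d₁ ≠ x := hxC d₁ (Or.inl hd₁)
  have hd₁u : UnivIn G C₁ d₁ := by
    refine pairDom G x C₂ C₁ hdisj.symm (by rw [Set.union_comm]; exact hunion)
      hnoadj' ⟨d₁, hd₁⟩ hd₂u.1 hd₁x ?_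
    rw [Set.pair_comm]; exact hdom
  -- second universal vertex of C₂
  have hd₂d₁ : d₂ ≠ d₁ := fun h => Set.disjoint_left.mp hdisj hd₁ (h ▸ hd₂u.1)
  obtain ⟨d₂', hd₂'mem, hdom'⟩ := H d₂ (by
    intro h; rcases h with rfl | rfl
    · exact hd₂x rfl
    · exact hd₂d₁ rfl)
  have hd₂'x : d₂' ≠ x := fun h => hd₂'mem (by left; exact h)
  have hd₂'u : UnivIn G C₂ d₂' := pairDom G x C₁ C₂ hdisj hunion hnoadj ⟨w, hw⟩ hd₁ hd₂'x hdom'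
  have hne : d₂' ≠ d₂ := fun h => hd₂'mem (by right; right; exact h)
  exact ⟨hd₁u, d₂', d₂, hne, hd₂'u, hd₂u⟩

lemma two_le_ncard {V : Type*} [Fintype V] {S : Set V} {a b : V} (hne : a ≠ b)
    (ha : a ∈ S) (hb : b ∈ S) : 2 ≤ S.ncard := by
  have hsub : ({a, b} : Set V) ⊆ S := by
    intro v hv; rcases hv with rfl | rfl <;> assumption
  have := Set.ncard_le_ncard hsub (Set.toFinite S)
  rwa [Set.ncard_pair hne] at this

theorem stmt5' {V : Type*} [Fintype V] (G : SimpleGraph V) (hconn : G.Connected)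
    (hMB : (∀ s₁ : V, ∃ d₁, d₁ ≠ s₁ ∧
    (Dominating G {d₁} ∨
      ∀ s₂, s₂ ∉ ({s₁, d₁} : Set V) →
        ∃ d₂, d₂ ∉ ({s₁, d₁, s₂} : Set V) ∧ Dominating G {d₁, d₂})))
    (x : V) (C₁ C₂ : Set V)
    (hC₁ : C₁.Nonempty) (hC₂ : C₂.Nonempty) (hdisj : Disjoint C₁ C₂)
    (hunion : C₁ ∪ C₂ = {x}ᶜ)
    (hnoadj : ∀ u ∈ C₁, ∀ v ∈ C₂, ¬ G.Adj u v) :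
    (∃ v, UnivIn G C₁ v) ∧ (∃ v, UnivIn G C₂ v) ∧
      (2 ≤ {v | UnivIn G C₁ v}.ncard ∨ 2 ≤ {v | UnivIn G C₂ v}.ncard) := by
  have hnoadj' : ∀ u ∈ C₂, ∀ v ∈ C₁, ¬ G.Adj u v := fun u hu v hv h =>
    hnoadj v hv u hu h.symm
  obtain ⟨d₁, hd₁x, hcase⟩ := hMB x
  have hd₁mem : d₁ ∈ C₁ ∪ C₂ := by rw [hunion]; exact hd₁x
  have hnotdom : ¬ Dominating G {d₁} := by
    intro hdom
    rcases hd₁mem with h | h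
    · obtain ⟨w, hw⟩ := hC₂
      have : w ∉ ({d₁} : Set V) := by
        intro hh; rw [Set.mem_singleton_iff] at hh
        exact Set.disjoint_left.mp hdisj h (hh ▸ hw)
      obtain ⟨d, hd, hadj⟩ := hdom w this
      rw [Set.mem_singleton_iff] at hd; subst hd
      exact hnoadj d h w hw hadj
    · obtain ⟨w, hw⟩ := hC₁
      have : w ∉ ({d₁} : Set V) := by
        intro hh; rw [Set.mem_singleton_iff] at hh
        exact Set.disjoint_left.mp hdisj hw (hh ▸ h)
      obtain ⟨d, hd, hadj⟩ := hdom w this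
      rw [Set.mem_singleton_iff] at hd; subst hd
      exact hnoadj w hw d h hadj.symm
  have H := hcase.resolve_left hnotdom
  rcases hd₁mem with h | h
  · obtain ⟨hu₁, a, b, hab, ha, hb⟩ := half G x C₁ C₂ hdisj hunion hnoadj hC₂ h H
    exact ⟨⟨d₁, hu₁⟩, ⟨a, ha⟩, Or.inr (two_le_ncard hab ha hb)⟩
  · obtain ⟨hu₁, a, b, hab, ha, hb⟩ := half G x C₂ C₁ hdisj.symm
      (by rw [Set.union_comm]; exact hunion) hnoadj' hC₁ h H
    exact ⟨⟨a, ha⟩, ⟨d₁, hu₁⟩, Or.inl (two_le_ncard hab ha hb)⟩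

theorem stmt5 {V : Type*} [Fintype V] (G : SimpleGraph V) (hconn : G.Connected)
    (hMB : MBPrimeEqTwo G) (x : V) (C₁ C₂ : Set V)
    (hcomp : IsTwoComponents G x C₁ C₂) :
    (∃ v, UnivIn G C₁ v) ∧ (∃ v, UnivIn G C₂ v) ∧
      (2 ≤ {v | UnivIn G C₁ v}.ncard ∨ 2 ≤ {v | UnivIn G C₂ v}.ncard) := by
  obtain ⟨hC₁, hC₂, hdisj, hunion, _, _, hnoadj⟩ := hcomp
  exact stmt5' G hconn hMB.1 x C₁ C₂ hC₁ hC₂ hdisj hunion hnoadj
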